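/- arXiv:1110.6358 — 2 statements merged into one kernel-verified Lean document; each statement's English description precedes it below -/
import Mathlib

section
/- Under conditions t_{k+q} - t_k = T₂ and l_{k+q} = l_k for all k ∈ ℤ, and T = sT₂, the function Δ(t₀) = Σ_{k=j}^{msq+j} DH(q(t_k - t₀, r)) · l_k(q(t_k - t₀, r), 0), defined for t₀ ∈ (t_{j-1}, t_j] with the index j depending on t₀, satisfies Δ(t₀ + T) = Δ(t₀) for all t₀ ∈ ℝ; that is, Δ is T-periodic. -/
/-- Dot product on ℝ². -/
def dot2 (a b : ℝ × ℝ) : ℝ := a.1 * b.1 + a.2 * b.2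

theorem map_add_nsmul_of_map_add {G H : Type*} [AddMonoid G] [AddMonoid H] {f : G → H}
    {c : G} {d : H} (hf : ∀ x, f (x + c) = f x + d) (n : ℕ) (x : G) :
    f (x + n • c) = f x + n • d := by
  have hsemiconj : Function.Semiconj f (· + c) (· + d) := hf
  simpa only [add_right_iterate] using hsemiconj.iterate_right n x

theorem Finset.sum_Icc_add_right {α M : Type*} [AddCommMonoid α] [PartialOrder α]
    [IsOrderedCancelAddMonoid α] [ExistsAddOfLE α] [LocallyFiniteOrder α] [AddCommMonoid M]
    (F : α → M) (a b p : α) :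
    ∑ k ∈ Finset.Icc (a + p) (b + p), F k = ∑ k ∈ Finset.Icc a b, F (k + p) := by
  rw [← Finset.map_add_right_Icc, Finset.sum_map]
  rfl

theorem stmt5_general (t : ℤ → ℝ) (q s m : ℕ)
    (T₂ T : ℝ) (hT : T = s * T₂)
    (l : ℤ → ℝ × ℝ → ℝ → ℝ × ℝ)
    (qq : ℝ → ℝ × ℝ) (DH : ℝ × ℝ → ℝ × ℝ)
    (htq : ∀ k : ℤ, t (k + (q : ℤ)) = t k + T₂)
    (hlq : ∀ k : ℤ, l (k + (q : ℤ)) = l k) :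
    ∀ (j : ℤ) (t₀ : ℝ),
      (∑ k ∈ Finset.Icc (j + (s * q : ℕ)) ((m * s * q : ℕ) + j + (s * q : ℕ)),
        dot2 (DH (qq (t k - (t₀ + T)))) (l k (qq (t k - (t₀ + T))) 0)) =
      ∑ k ∈ Finset.Icc j ((m * s * q : ℕ) + j),
        dot2 (DH (qq (t k - t₀))) (l k (qq (t k - t₀)) 0) := by
  intro j t₀
  have hshift : (((s * q : ℕ) : ℤ)) = s • (q : ℤ) := by rw [nsmul_eq_mul, Nat.cast_mul]
  have ht (k : ℤ) : t (k + (s * q : ℕ)) - (t₀ + T) = t k - t₀ := by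
    rw [hshift, map_add_nsmul_of_map_add htq, hT, nsmul_eq_mul]
    ring
  have hl (k : ℤ) : l (k + (s * q : ℕ)) = l k := by
    rw [hshift]
    exact Function.Periodic.nsmul hlq s k
  rw [Finset.sum_Icc_add_right]
  simp only [ht, hl]

/-- the function
`Δ(t₀) = Σ_{k=j}^{msq+j} DH(q(t_k - t₀, r)) · l_k(q(t_k - t₀, r), 0)`
is `T`-periodic: shifting `t₀` by `T = sT₂` and the index window by `sq`
gives the same value. -/
theorem stmt5 (t : ℤ → ℝ) (q s m : ℕ) (hq : 1 ≤ q) (hs : 1 ≤ s) (hm : 1 ≤ m)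
    (T₂ T : ℝ) (hT₂ : 0 < T₂) (hT : T = s * T₂)
    (l : ℤ → ℝ × ℝ → ℝ → ℝ × ℝ)
    (qq : ℝ → ℝ × ℝ) (DH : ℝ × ℝ → ℝ × ℝ)
    (htq : ∀ k : ℤ, t (k + (q : ℤ)) = t k + T₂)
    (hlq : ∀ k : ℤ, l (k + (q : ℤ)) = l k) :
    ∀ (j : ℤ) (t₀ : ℝ),
      (∑ k ∈ Finset.Icc (j + (s * q : ℕ)) ((m * s * q : ℕ) + j + (s * q : ℕ)),
        dot2 (DH (qq (t k - (t₀ + T)))) (l k (qq (t k - (t₀ + T))) 0)) =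
      ∑ k ∈ Finset.Icc j ((m * s * q : ℕ) + j),
        dot2 (DH (qq (t k - t₀))) (l k (qq (t k - t₀)) 0) :=
  stmt5_general t q s m T₂ T hT l qq DH htq hlq
end

section
/- The system M(t₀,h₀) = 0, N(t₀,h₀) = 0 with M(t₀,r) = 2πr[1 + 2√(2r)(cos³t₀ + sin³t₀)] and N(t₀,r) = π√(r/2) sin(2t₀)(sin t₀ - cos t₀), restricted to t₀ ∈ [0,2π], h₀ > 0, has exactly three solutions: (5π/4, 1/4), (π, 1/8), and (3π/2, 1/8). -/
/-!
For `r > 0` the factors `2πr` and `π√(r/2)` do not vanish, so `N = 0` says `sin t = 0`,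
`cos t = 0` or `sin t = cos t`: seven values of `t` in `[0, 2π]`. With `c = cos³t + sin³t`,
squaring turns `M = 0` into `c < 0 ∧ 8rc² = 1`; this excludes the four values of `t` with
`c > 0` and fixes `r` at the other three (`c = -1` at `π, 3π/2`, `c = -√2/2` at `5π/4`).
-/

open Real Set

lemma exists_int_of_sin_eq_zero_of_mem_Ioo {x : ℝ} {a b : ℤ} (h : sin x = 0)
    (hx : x ∈ Ioo (a * π) (b * π)) : ∃ n : ℤ, x = n * π ∧ a < n ∧ n < b := by
  obtain ⟨n, rfl⟩ := sin_eq_zero_iff.1 h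
  refine ⟨n, rfl, ?_, ?_⟩
  · exact_mod_cast (mul_lt_mul_iff_left₀ pi_pos).1 hx.1
  · exact_mod_cast (mul_lt_mul_iff_left₀ pi_pos).1 hx.2

lemma eq_of_sin_two_mul_mul_sin_sub_cos_eq_zero {t : ℝ} (ht : t ∈ Icc 0 (2 * π))
    (h : sin (2 * t) * (sin t - cos t) = 0) :
    t = 0 ∨ t = π / 4 ∨ t = π / 2 ∨ t = π ∨ t = 5 * π / 4 ∨ t = 3 * π / 2 ∨
      t = 2 * π := by
  have := pi_pos
  obtain ⟨ht₀, ht₁⟩ := ht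
  rw [sin_two_mul, mul_eq_zero, mul_eq_zero, mul_eq_zero, sub_eq_zero] at h
  rcases h with ((h | hsin) | hcos) | hsc
  · norm_num at h
  · obtain ⟨n, hn, h₀, h₁⟩ := exists_int_of_sin_eq_zero_of_mem_Ioo (a := -1) (b := 3) hsin
      ⟨by push_cast; linarith, by push_cast; linarith⟩
    interval_cases n <;> push_cast at hn <;> simp [hn]
  · have hs : sin (t - π / 2) = 0 := by rw [sin_sub_pi_div_two, hcos, neg_zero]
    obtain ⟨n, hn, h₀, h₁⟩ := exists_int_of_sin_eq_zero_of_mem_Ioo (a := -1) (b := 2) hs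
      ⟨by push_cast; linarith, by push_cast; linarith⟩
    interval_cases n <;> push_cast at hn
    · simp [show t = π / 2 by linarith]
    · simp [show t = 3 * π / 2 by linarith]
  · have hs : sin (t - π / 4) = 0 := by
      rw [sin_sub, cos_pi_div_four, sin_pi_div_four, hsc, sub_self]
    obtain ⟨n, hn, h₀, h₁⟩ := exists_int_of_sin_eq_zero_of_mem_Ioo (a := -1) (b := 2) hs
      ⟨by push_cast; linarith, by push_cast; linarith⟩
    interval_cases n <;> push_cast at hn
    · simp [show t = π / 4 by linarith]
    · simp [show t = 5 * π / 4 by linarith]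

lemma one_add_two_mul_sqrt_mul_eq_zero_iff {r c : ℝ} (hr : 0 ≤ r) :
    1 + 2 * √(2 * r) * c = 0 ↔ c < 0 ∧ 8 * r * c ^ 2 = 1 := by
  have hsq : (2 * √(2 * r) * c) ^ 2 = 8 * r * c ^ 2 := by
    rw [mul_pow, mul_pow, sq_sqrt (by linarith)]; ring
  rw [← hsq]
  constructor
  · intro h
    have hx : 2 * √(2 * r) * c = -1 := by linarith
    refine ⟨?_, by rw [hx]; norm_num⟩
    by_contra! hc
    have : 0 ≤ 2 * √(2 * r) * c := by positivity
    linarith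
  · rintro ⟨hc, h⟩
    have : 2 * √(2 * r) * c ≤ 0 := mul_nonpos_of_nonneg_of_nonpos (by positivity) hc.le
    nlinarith

lemma cos_five_pi_div_four : cos (5 * π / 4) = -(√2 / 2) := by
  rw [show 5 * π / 4 = π / 4 + π by ring, cos_add_pi, cos_pi_div_four]

lemma sin_five_pi_div_four : sin (5 * π / 4) = -(√2 / 2) := by
  rw [show 5 * π / 4 = π / 4 + π by ring, sin_add_pi, sin_pi_div_four]

lemma cos_three_pi_div_two : cos (3 * π / 2) = 0 := by
  rw [show 3 * π / 2 = π / 2 + π by ring, cos_add_pi, cos_pi_div_two, neg_zero]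

lemma sin_three_pi_div_two : sin (3 * π / 2) = -1 := by
  rw [show 3 * π / 2 = π / 2 + π by ring, sin_add_pi, sin_pi_div_two]

lemma cos_pow_three_add_sin_pow_three_pi_div_four :
    cos (π / 4) ^ 3 + sin (π / 4) ^ 3 = √2 / 2 := by
  rw [cos_pi_div_four, sin_pi_div_four]
  linear_combination (√2 / 4) * sq_sqrt (zero_le_two : (0 : ℝ) ≤ 2)

lemma cos_pow_three_add_sin_pow_three_five_pi_div_four :
    cos (5 * π / 4) ^ 3 + sin (5 * π / 4) ^ 3 = -(√2 / 2) := by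
  rw [cos_five_pi_div_four, sin_five_pi_div_four]
  linear_combination (-√2 / 4) * sq_sqrt (zero_le_two : (0 : ℝ) ≤ 2)

lemma system_eq_zero_iff {t r : ℝ} (hr : 0 < r) :
    (2 * π * r * (1 + 2 * √(2 * r) * (cos t ^ 3 + sin t ^ 3)) = 0 ∧
      π * √(r / 2) * sin (2 * t) * (sin t - cos t) = 0) ↔
    (cos t ^ 3 + sin t ^ 3 < 0 ∧ 8 * r * (cos t ^ 3 + sin t ^ 3) ^ 2 = 1) ∧
      sin (2 * t) * (sin t - cos t) = 0 := by
  have h₁ : 2 * π * r ≠ 0 := by positivity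
  have h₂ : π * √(r / 2) ≠ 0 := by positivity
  rw [mul_assoc (π * √(r / 2)), mul_eq_zero_iff_left h₁, mul_eq_zero_iff_left h₂,
    one_add_two_mul_sqrt_mul_eq_zero_iff hr.le]

/-- the system `M(t₀,h₀) = N(t₀,h₀) = 0`, with
`M(t₀,r) = 2πr[1 + 2√(2r)(cos³t₀ + sin³t₀)]` and
`N(t₀,r) = π√(r/2) sin(2t₀)(sin t₀ - cos t₀)`, restricted to
`t₀ ∈ [0,2π]`, `h₀ > 0`, has exactly the three solutions
`(5π/4, 1/4)`, `(π, 1/8)`, `(3π/2, 1/8)`. -/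
theorem stmt13 (M N : ℝ → ℝ → ℝ)
    (hM : ∀ t₀ r : ℝ, M t₀ r =
      2 * Real.pi * r *
        (1 + 2 * Real.sqrt (2 * r) * (Real.cos t₀ ^ 3 + Real.sin t₀ ^ 3)))
    (hN : ∀ t₀ r : ℝ, N t₀ r =
      Real.pi * Real.sqrt (r / 2) * Real.sin (2 * t₀) *
        (Real.sin t₀ - Real.cos t₀)) :
    {p : ℝ × ℝ | p.1 ∈ Set.Icc 0 (2 * Real.pi) ∧ 0 < p.2 ∧
        M p.1 p.2 = 0 ∧ N p.1 p.2 = 0} =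
      {(5 * Real.pi / 4, 1 / 4), (Real.pi, 1 / 8),
        (3 * Real.pi / 2, 1 / 8)} := by
  have hπ := pi_pos
  have hsq : (-(√2 / 2)) ^ 2 = (1 / 2 : ℝ) := by
    rw [neg_sq, div_pow, sq_sqrt zero_le_two]; norm_num
  ext ⟨t, r⟩
  simp only [mem_ofPred_eq, mem_insert_iff, mem_singleton_iff, Prod.mk.injEq, hM, hN]
  constructor
  · rintro ⟨ht, hr, h⟩
    obtain ⟨⟨hneg, hr⟩, hN₀⟩ := (system_eq_zero_iff hr).1 h
    rcases eq_of_sin_two_mul_mul_sin_sub_cos_eq_zero ht hN₀ with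
      rfl | rfl | rfl | rfl | rfl | rfl | rfl
    · norm_num at hneg
    · rw [cos_pow_three_add_sin_pow_three_pi_div_four] at hneg
      linarith [sqrt_nonneg 2]
    · norm_num at hneg
    · norm_num at hr
      exact Or.inr (Or.inl ⟨rfl, by linarith⟩)
    · rw [cos_pow_three_add_sin_pow_three_five_pi_div_four, hsq] at hr
      exact Or.inl ⟨rfl, by linarith⟩
    · norm_num [cos_three_pi_div_two, sin_three_pi_div_two] at hr
      exact Or.inr (Or.inr ⟨rfl, by linarith⟩)
    · norm_num at hneg
  · rintro (⟨rfl, rfl⟩ | ⟨rfl, rfl⟩ | ⟨rfl, rfl⟩) <;>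
      refine ⟨⟨by linarith, by linarith⟩, by norm_num,
        (system_eq_zero_iff (by norm_num)).2 ?_⟩
    · rw [cos_pow_three_add_sin_pow_three_five_pi_div_four]
      refine ⟨⟨neg_lt_zero.2 (by positivity), by rw [hsq]; norm_num⟩,
        mul_eq_zero_of_right _ ?_⟩
      rw [sin_five_pi_div_four, cos_five_pi_div_four, sub_self]
    · exact ⟨by norm_num, mul_eq_zero_of_left (sin_eq_zero_iff.2 ⟨2, by ring⟩) _⟩
    · exact ⟨by norm_num [cos_three_pi_div_two, sin_three_pi_div_two],
        mul_eq_zero_of_left (sin_eq_zero_iff.2 ⟨3, by ring⟩) _⟩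
end
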